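/- arXiv:1111.5908 — 3 statements merged into one kernel-verified Lean document; each statement's English description precedes it below -/
import Mathlib

section
/- If a Banach manifold M is smooth regular (admits smooth bump functions around every point), then any almost Lie bracket on an anchored Banach bundle (E, τ, M, ρ) is localizable: for every open set U ⊆ M there is a unique bracket [·,·]_U on sections over U such that [s₁|_U, s₂|_U]_U = ([s₁, s₂]_ρ)|_U for all global sections s₁, s₂, and these local brackets are compatible with restriction to smaller open sets. -/
/- Trivial-bundle model of an anchored Banach bundle `(E, τ, M, ρ)`: the base manifold is
(identified with) the Banach space `𝕄`, sections of `E` are maps `𝕄 → 𝔼`, and the anchor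
is a field of continuous linear maps `ρ : 𝕄 → (𝔼 →L[ℝ] 𝕄)`.  Local sections over an open
set `U` are represented by maps `𝕄 → 𝔼` considered only through their values on `U`. -/

variable {𝕄 𝔼 : Type*} [NormedAddCommGroup 𝕄] [NormedSpace ℝ 𝕄]
  [NormedAddCommGroup 𝔼] [NormedSpace ℝ 𝔼]

/-- `M` is smooth regular: every point has bump functions subordinate to any neighborhood. -/
def SmoothRegular (𝕄 : Type*) [NormedAddCommGroup 𝕄] [NormedSpace ℝ 𝕄] : Prop :=
  ∀ (x : 𝕄) (U : Set 𝕄), IsOpen U → x ∈ U →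
    ∃ f : 𝕄 → ℝ, ContDiff ℝ (⊤ : ℕ∞) f ∧ f x = 1 ∧ closure {z | f z ≠ 0} ⊆ U

/-- An almost Lie bracket on an anchored bundle: a skew-symmetric ℝ-bilinear bracket on
sections satisfying the Leibniz rule `[s₁, f·s₂] = f·[s₁,s₂] + (ρ(s₁)f)·s₂`. -/
structure IsALBracket (ρ : 𝕄 → 𝔼 →L[ℝ] 𝕄)
    (br : (𝕄 → 𝔼) → (𝕄 → 𝔼) → (𝕄 → 𝔼)) : Prop where
  skew : ∀ s₁ s₂, br s₁ s₂ = -br s₂ s₁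
  add_left : ∀ s₁ s₂ t, br (s₁ + s₂) t = br s₁ t + br s₂ t
  smul_left : ∀ (c : ℝ) (s t : 𝕄 → 𝔼), br (c • s) t = c • br s t
  leibniz : ∀ (s₁ s₂ : 𝕄 → 𝔼) (f : 𝕄 → ℝ), ContDiff ℝ (⊤ : ℕ∞) s₁ →
    ContDiff ℝ (⊤ : ℕ∞) s₂ → ContDiff ℝ (⊤ : ℕ∞) f →
    br s₁ (fun x => f x • s₂ x) =
      fun x => f x • br s₁ s₂ x + (fderiv ℝ f x (ρ x (s₁ x))) • s₂ x

/-- The defining properties of a localization `B` of the bracket `br`:  on each open `U`,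
`B U` only depends on the values of (smooth-on-`U`) sections on `U`, it restricts the
global bracket, and the local brackets are compatible with restriction to smaller opens. -/
def IsBracketLocalization (ρ : 𝕄 → 𝔼 →L[ℝ] 𝕄)
    (br : (𝕄 → 𝔼) → (𝕄 → 𝔼) → (𝕄 → 𝔼))
    (B : Set 𝕄 → (𝕄 → 𝔼) → (𝕄 → 𝔼) → (𝕄 → 𝔼)) : Prop :=
  ∀ U : Set 𝕄, IsOpen U →
    -- `B U` is well defined on sections over `U`
    (∀ s₁ s₂ t₁ t₂ : 𝕄 → 𝔼, ContDiffOn ℝ (⊤ : ℕ∞) s₁ U → ContDiffOn ℝ (⊤ : ℕ∞) s₂ U →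
      Set.EqOn s₁ t₁ U → Set.EqOn s₂ t₂ U → Set.EqOn (B U s₁ s₂) (B U t₁ t₂) U) ∧
    -- restriction of the global bracket
    (∀ s₁ s₂ : 𝕄 → 𝔼, ContDiff ℝ (⊤ : ℕ∞) s₁ → ContDiff ℝ (⊤ : ℕ∞) s₂ →
      Set.EqOn (B U s₁ s₂) (br s₁ s₂) U) ∧
    -- compatibility with restriction to smaller open sets
    (∀ V : Set 𝕄, IsOpen V → V ⊆ U → ∀ s₁ s₂ : 𝕄 → 𝔼,
      ContDiffOn ℝ (⊤ : ℕ∞) s₁ U → ContDiffOn ℝ (⊤ : ℕ∞) s₂ U →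
      Set.EqOn (B U s₁ s₂) (B V s₁ s₂) V) ∧
    -- each `B U` is an almost Lie bracket over `U`
    (∀ (s₁ s₂ : 𝕄 → 𝔼) (f : 𝕄 → ℝ), ContDiffOn ℝ (⊤ : ℕ∞) s₁ U →
      ContDiffOn ℝ (⊤ : ℕ∞) s₂ U → ContDiffOn ℝ (⊤ : ℕ∞) f U →
      Set.EqOn (B U s₁ (fun x => f x • s₂ x))
        (fun x => f x • B U s₁ s₂ x + (fderivWithin ℝ f U x (ρ x (s₁ x))) • s₂ x) U)

open Filter Topology

private lemma bump_exists {𝕄 : Type*} [NormedAddCommGroup 𝕄] [NormedSpace ℝ 𝕄]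
    (hreg : SmoothRegular 𝕄) (x : 𝕄) (U : Set 𝕄) (hU : IsOpen U) (hx : x ∈ U) :
    ∃ f : 𝕄 → ℝ, ContDiff ℝ (⊤ : ℕ∞) f ∧ (∀ᶠ z in 𝓝 x, f z = 1) ∧
      closure {z | f z ≠ 0} ⊆ U := by
  obtain ⟨f, hf, hfx, hfsupp⟩ := hreg x U hU hx
  refine ⟨fun z => Real.smoothTransition (3 * f z - 1), ?_, ?_, ?_⟩
  · exact Real.smoothTransition.contDiff.comp ((contDiff_const.mul hf).sub contDiff_const)
  · have hopen : IsOpen {z | 2/3 < f z} := isOpen_lt continuous_const hf.continuous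
    have hxm : x ∈ {z | 2/3 < f z} := by simp only [Set.mem_setOf_eq, hfx]; norm_num
    filter_upwards [hopen.mem_nhds hxm] with z hz
    have hz' : 2/3 < f z := hz
    have h1 : (1:ℝ) ≤ 3 * f z - 1 := by linarith
    exact Real.smoothTransition.one_of_one_le h1
  · refine (closure_mono ?_).trans hfsupp
    intro z hz
    simp only [Set.mem_setOf_eq] at hz ⊢
    intro h0
    exact hz (by rw [h0]; exact Real.smoothTransition.zero_of_nonpos (by norm_num))

private lemma smooth_bump_smul {𝕄 F : Type*} [NormedAddCommGroup 𝕄] [NormedSpace ℝ 𝕄]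
    [NormedAddCommGroup F] [NormedSpace ℝ F]
    {f : 𝕄 → ℝ} {s : 𝕄 → F} {U : Set 𝕄} (hU : IsOpen U)
    (hf : ContDiff ℝ (⊤ : ℕ∞) f) (hsupp : closure {z | f z ≠ 0} ⊆ U)
    (hs : ContDiffOn ℝ (⊤ : ℕ∞) s U) :
    ContDiff ℝ (⊤ : ℕ∞) (fun z => f z • s z) := by
  rw [contDiff_iff_contDiffAt]
  intro z
  by_cases hz : z ∈ U
  · exact (hf.contDiffOn.smul hs).contDiffAt (hU.mem_nhds hz)
  · have hz' : z ∈ (closure {w | f w ≠ 0})ᶜ := fun h => hz (hsupp h)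
    have hopen : IsOpen (closure {w | f w ≠ 0})ᶜ := isClosed_closure.isOpen_compl
    refine (contDiffAt_const (c := (0:F))).congr_of_eventuallyEq ?_
    filter_upwards [hopen.mem_nhds hz'] with w hw
    have hfw : f w = 0 := by
      by_contra h
      exact hw (subset_closure h)
    simp [hfw]

private lemma bracket_bump_eq {𝕄 𝔼 : Type*} [NormedAddCommGroup 𝕄] [NormedSpace ℝ 𝕄]
    [NormedAddCommGroup 𝔼] [NormedSpace ℝ 𝔼]
    {ρ : 𝕄 → 𝔼 →L[ℝ] 𝕄} {br : (𝕄 → 𝔼) → (𝕄 → 𝔼) → (𝕄 → 𝔼)}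
    (hbr : IsALBracket ρ br) {s₁ s₂ : 𝕄 → 𝔼} {f : 𝕄 → ℝ} {x : 𝕄}
    (hs₁ : ContDiff ℝ (⊤ : ℕ∞) s₁) (hs₂ : ContDiff ℝ (⊤ : ℕ∞) s₂)
    (hf : ContDiff ℝ (⊤ : ℕ∞) f) (hfx : ∀ᶠ z in 𝓝 x, f z = 1) :
    br (fun z => f z • s₁ z) (fun z => f z • s₂ z) x = br s₁ s₂ x := by
  have hf1 : f x = 1 := hfx.self_of_nhds
  have hDf : fderiv ℝ f x = 0 := by
    have he : f =ᶠ[𝓝 x] fun _ => (1:ℝ) := hfx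
    rw [he.fderiv_eq, fderiv_fun_const]
    rfl
  have e1 := congrFun (hbr.leibniz (fun z => f z • s₁ z) s₂ f (hf.smul hs₁) hs₂ hf) x
  have e2 := congrFun (hbr.leibniz s₂ s₁ f hs₂ hs₁ hf) x
  simp only [hf1, hDf, ContinuousLinearMap.zero_apply, zero_smul, add_zero, one_smul] at e1 e2
  rw [e1]
  have sk1 := congrFun (hbr.skew (fun z => f z • s₁ z) s₂) x
  have sk2 := congrFun (hbr.skew s₁ s₂) x
  simp only [Pi.neg_apply] at sk1 sk2
  rw [sk1, e2, ← sk2]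

private lemma bump_indep {𝕄 𝔼 : Type*} [NormedAddCommGroup 𝕄] [NormedSpace ℝ 𝕄]
    [NormedAddCommGroup 𝔼] [NormedSpace ℝ 𝔼]
    {ρ : 𝕄 → 𝔼 →L[ℝ] 𝕄} {br : (𝕄 → 𝔼) → (𝕄 → 𝔼) → (𝕄 → 𝔼)}
    (hbr : IsALBracket ρ br) {s₁ s₂ : 𝕄 → 𝔼} {f g : 𝕄 → ℝ} {x : 𝕄} {U : Set 𝕄}
    (hU : IsOpen U)
    (hs₁ : ContDiffOn ℝ (⊤ : ℕ∞) s₁ U) (hs₂ : ContDiffOn ℝ (⊤ : ℕ∞) s₂ U)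
    (hf : ContDiff ℝ (⊤ : ℕ∞) f) (hfx : ∀ᶠ z in 𝓝 x, f z = 1)
    (hfs : closure {z | f z ≠ 0} ⊆ U)
    (hg : ContDiff ℝ (⊤ : ℕ∞) g) (hgx : ∀ᶠ z in 𝓝 x, g z = 1)
    (hgs : closure {z | g z ≠ 0} ⊆ U) :
    br (fun z => f z • s₁ z) (fun z => f z • s₂ z) x
      = br (fun z => g z • s₁ z) (fun z => g z • s₂ z) x := by
  have ha : ContDiff ℝ (⊤ : ℕ∞) (fun z => g z • s₁ z) := smooth_bump_smul hU hg hgs hs₁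
  have hb : ContDiff ℝ (⊤ : ℕ∞) (fun z => g z • s₂ z) := smooth_bump_smul hU hg hgs hs₂
  have ha' : ContDiff ℝ (⊤ : ℕ∞) (fun z => f z • s₁ z) := smooth_bump_smul hU hf hfs hs₁
  have hb' : ContDiff ℝ (⊤ : ℕ∞) (fun z => f z • s₂ z) := smooth_bump_smul hU hf hfs hs₂
  have h1 : br (fun z => f z • (g z • s₁ z)) (fun z => f z • (g z • s₂ z)) x
      = br (fun z => g z • s₁ z) (fun z => g z • s₂ z) x :=
    bracket_bump_eq hbr ha hb hf hfx
  have h2 : br (fun z => g z • (f z • s₁ z)) (fun z => g z • (f z • s₂ z)) x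
      = br (fun z => f z • s₁ z) (fun z => f z • s₂ z) x :=
    bracket_bump_eq hbr ha' hb' hg hgx
  rw [← h1, ← h2]
  congr 2 <;> funext z <;> rw [smul_comm]

/-- If `M` is smooth regular, every almost Lie bracket on an anchored Banach bundle is
localizable, and the local brackets are unique. -/
theorem stmt2 (hreg : SmoothRegular 𝕄) (ρ : 𝕄 → 𝔼 →L[ℝ] 𝕄)
    (br : (𝕄 → 𝔼) → (𝕄 → 𝔼) → (𝕄 → 𝔼)) (hbr : IsALBracket ρ br) :
    (∃ B, IsBracketLocalization ρ br B) ∧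
    ∀ B B', IsBracketLocalization ρ br B → IsBracketLocalization ρ br B' →
      ∀ U : Set 𝕄, IsOpen U → ∀ s₁ s₂ : 𝕄 → 𝔼,
        ContDiffOn ℝ (⊤ : ℕ∞) s₁ U → ContDiffOn ℝ (⊤ : ℕ∞) s₂ U →
        Set.EqOn (B U s₁ s₂) (B' U s₁ s₂) U := by
  classical
  constructor
  · -- existence
    refine ⟨fun U s₁ s₂ x =>
      if h : IsOpen U ∧ x ∈ U then
        br (fun z => (bump_exists hreg x U h.1 h.2).choose z • s₁ z)
           (fun z => (bump_exists hreg x U h.1 h.2).choose z • s₂ z) x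
      else 0, fun U hU => ?_⟩
    have hBval : ∀ (x : 𝕄) (hx : x ∈ U) (s₁ s₂ : 𝕄 → 𝔼),
        (if h : IsOpen U ∧ x ∈ U then
          br (fun z => (bump_exists hreg x U h.1 h.2).choose z • s₁ z)
             (fun z => (bump_exists hreg x U h.1 h.2).choose z • s₂ z) x
        else 0)
        = br (fun z => (bump_exists hreg x U hU hx).choose z • s₁ z)
             (fun z => (bump_exists hreg x U hU hx).choose z • s₂ z) x := by
      intro x hx s₁ s₂
      exact dif_pos ⟨hU, hx⟩
    refine ⟨?_, ?_, ?_, ?_⟩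
    · -- well defined
      intro s₁ s₂ t₁ t₂ _ _ he₁ he₂ x hx
      obtain ⟨hg, hgx, hgs⟩ : ContDiff ℝ (⊤ : ℕ∞) (bump_exists hreg x U hU hx).choose ∧
          (∀ᶠ z in 𝓝 x, (bump_exists hreg x U hU hx).choose z = 1) ∧
          closure {z | (bump_exists hreg x U hU hx).choose z ≠ 0} ⊆ U :=
        (bump_exists hreg x U hU hx).choose_spec
      simp only [hBval x hx]
      congr 2 <;> funext z
      · by_cases hz : (bump_exists hreg x U hU hx).choose z = 0
        · simp [hz]
        · rw [he₁ (hgs (subset_closure hz))]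
      · by_cases hz : (bump_exists hreg x U hU hx).choose z = 0
        · simp [hz]
        · rw [he₂ (hgs (subset_closure hz))]
    · -- restriction of global bracket
      intro s₁ s₂ h1 h2 x hx
      obtain ⟨hg, hgx, hgs⟩ : ContDiff ℝ (⊤ : ℕ∞) (bump_exists hreg x U hU hx).choose ∧
          (∀ᶠ z in 𝓝 x, (bump_exists hreg x U hU hx).choose z = 1) ∧
          closure {z | (bump_exists hreg x U hU hx).choose z ≠ 0} ⊆ U :=
        (bump_exists hreg x U hU hx).choose_spec
      simp only [hBval x hx]
      exact bracket_bump_eq hbr h1 h2 hg hgx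
    · -- compatibility with restriction
      intro V hV hVU s₁ s₂ h1 h2 x hx
      have hxU : x ∈ U := hVU hx
      obtain ⟨hg, hgx, hgs⟩ : ContDiff ℝ (⊤ : ℕ∞) (bump_exists hreg x U hU hxU).choose ∧
          (∀ᶠ z in 𝓝 x, (bump_exists hreg x U hU hxU).choose z = 1) ∧
          closure {z | (bump_exists hreg x U hU hxU).choose z ≠ 0} ⊆ U :=
        (bump_exists hreg x U hU hxU).choose_spec
      obtain ⟨hk, hkx, hks⟩ : ContDiff ℝ (⊤ : ℕ∞) (bump_exists hreg x V hV hx).choose ∧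
          (∀ᶠ z in 𝓝 x, (bump_exists hreg x V hV hx).choose z = 1) ∧
          closure {z | (bump_exists hreg x V hV hx).choose z ≠ 0} ⊆ V :=
        (bump_exists hreg x V hV hx).choose_spec
      show (if h : IsOpen U ∧ x ∈ U then _ else 0) = if h : IsOpen V ∧ x ∈ V then _ else 0
      rw [dif_pos ⟨hU, hxU⟩, dif_pos ⟨hV, hx⟩]
      exact bump_indep hbr hU h1 h2 hg hgx hgs hk hkx (hks.trans hVU)
    · -- Leibniz rule for the local bracket
      intro s₁ s₂ f h1 h2 hf x hx
      obtain ⟨hg, hgx, hgs⟩ : ContDiff ℝ (⊤ : ℕ∞) (bump_exists hreg x U hU hx).choose ∧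
          (∀ᶠ z in 𝓝 x, (bump_exists hreg x U hU hx).choose z = 1) ∧
          closure {z | (bump_exists hreg x U hU hx).choose z ≠ 0} ⊆ U :=
        (bump_exists hreg x U hU hx).choose_spec
      set g := (bump_exists hreg x U hU hx).choose with hg_def
      obtain ⟨W₀, hW₀sub, hW₀open, hxW₀⟩ := eventually_nhds_iff.mp hgx
      have hWopen : IsOpen (W₀ ∩ U) := hW₀open.inter hU
      have hxW : x ∈ W₀ ∩ U := ⟨hxW₀, hx⟩
      obtain ⟨hk, hkx, hks⟩ : ContDiff ℝ (⊤ : ℕ∞) (bump_exists hreg x (W₀ ∩ U) hWopen hxW).choose ∧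
          (∀ᶠ z in 𝓝 x, (bump_exists hreg x (W₀ ∩ U) hWopen hxW).choose z = 1) ∧
          closure {z | (bump_exists hreg x (W₀ ∩ U) hWopen hxW).choose z ≠ 0} ⊆ W₀ ∩ U :=
        (bump_exists hreg x (W₀ ∩ U) hWopen hxW).choose_spec
      set k := (bump_exists hreg x (W₀ ∩ U) hWopen hxW).choose with hk_def
      have hksU : closure {z | k z ≠ 0} ⊆ U := hks.trans Set.inter_subset_right
      have hkW : {z | k z ≠ 0} ⊆ W₀ := fun z hz => (hks (subset_closure hz)).1
      have hks₁ : ContDiff ℝ (⊤ : ℕ∞) (fun z => k z • s₁ z) := smooth_bump_smul hU hk hksU h1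
      have hks₂ : ContDiff ℝ (⊤ : ℕ∞) (fun z => k z • s₂ z) := smooth_bump_smul hU hk hksU h2
      have hgf : ContDiff ℝ (⊤ : ℕ∞) (fun z => g z • f z) := smooth_bump_smul hU hg hgs hf
      have stepA : br (fun z => g z • (f z • s₂ z)) (fun z => g z • s₁ z) x
          = br (fun z => k z • (f z • s₂ z)) (fun z => k z • s₁ z) x := by
        exact bump_indep hbr hU (hf.smul h2) h1 hg hgx hgs hk hkx hksU
      have stepA' : br (fun z => g z • s₁ z) (fun z => g z • (f z • s₂ z)) x
          = br (fun z => k z • s₁ z) (fun z => k z • (f z • s₂ z)) x :=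
        bump_indep hbr hU h1 (hf.smul h2) hg hgx hgs hk hkx hksU
      have stepB : (fun z => k z • (f z • s₂ z)) = (fun z => (g z • f z) • (k z • s₂ z)) := by
        funext z
        by_cases hz : k z = 0
        · simp [hz]
        · rw [hW₀sub z (hkW hz), one_smul, smul_comm]
      have hlb := congrFun (hbr.leibniz (fun z => k z • s₁ z) (fun z => k z • s₂ z)
        (fun z => g z • f z) hks₁ hks₂ hgf) x
      have hk1 : k x = 1 := hkx.self_of_nhds
      have hg1 : g x = 1 := hgx.self_of_nhds
      have hfd : fderiv ℝ (fun z => g z • f z) x = fderivWithin ℝ f U x := by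
        have he : (fun z => g z • f z) =ᶠ[𝓝 x] f := by
          filter_upwards [hW₀open.mem_nhds hxW₀] with z hz
          rw [hW₀sub z hz, one_smul]
        rw [he.fderiv_eq, fderivWithin_of_isOpen hU hx]
      have hkg : br (fun z => k z • s₁ z) (fun z => k z • s₂ z) x
          = br (fun z => g z • s₁ z) (fun z => g z • s₂ z) x :=
        bump_indep hbr hU h1 h2 hk hkx hksU hg hgx hgs
      show (if h : IsOpen U ∧ x ∈ U then _ else 0)
        = f x • (if h : IsOpen U ∧ x ∈ U then _ else 0) + _
      rw [dif_pos ⟨hU, hx⟩, dif_pos ⟨hU, hx⟩]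
      calc br (fun z => g z • s₁ z) (fun z => g z • (f z • s₂ z)) x
          = br (fun z => k z • s₁ z) (fun z => k z • (f z • s₂ z)) x := stepA'
        _ = br (fun z => k z • s₁ z) (fun z => (g z • f z) • (k z • s₂ z)) x := by rw [stepB]
        _ = (g x • f x) • br (fun z => k z • s₁ z) (fun z => k z • s₂ z) x
              + (fderiv ℝ (fun z => g z • f z) x (ρ x (k x • s₁ x))) • (k x • s₂ x) := hlb
        _ = f x • br (fun z => g z • s₁ z) (fun z => g z • s₂ z) x
              + (fderivWithin ℝ f U x (ρ x (s₁ x))) • s₂ x := by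
            rw [hkg, hg1, one_smul, hk1, one_smul, one_smul, hfd]
  · -- uniqueness
    intro B B' hB hB' U hU s₁ s₂ h1 h2 x hx
    obtain ⟨g, hg, hgx, hgs⟩ := bump_exists hreg x U hU hx
    obtain ⟨W₀, hW₀sub, hW₀open, hxW₀⟩ := eventually_nhds_iff.mp hgx
    have hWopen : IsOpen (W₀ ∩ U) := hW₀open.inter hU
    have hxW : x ∈ W₀ ∩ U := ⟨hxW₀, hx⟩
    have ha : ContDiff ℝ (⊤ : ℕ∞) (fun z => g z • s₁ z) := smooth_bump_smul hU hg hgs h1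
    have hb : ContDiff ℝ (⊤ : ℕ∞) (fun z => g z • s₂ z) := smooth_bump_smul hU hg hgs h2
    have hEq1 : Set.EqOn s₁ (fun z => g z • s₁ z) (W₀ ∩ U) := fun z hz => by
      show _ = _ • _
      rw [hW₀sub z hz.1, one_smul]
    have hEq2 : Set.EqOn s₂ (fun z => g z • s₂ z) (W₀ ∩ U) := fun z hz => by
      show _ = _ • _
      rw [hW₀sub z hz.1, one_smul]
    have h1W := h1.mono (Set.inter_subset_right : W₀ ∩ U ⊆ U)
    have h2W := h2.mono (Set.inter_subset_right : W₀ ∩ U ⊆ U)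
    have key : ∀ C, IsBracketLocalization ρ br C →
        C U s₁ s₂ x = br (fun z => g z • s₁ z) (fun z => g z • s₂ z) x := by
      intro C hC
      have c3 := (hC U hU).2.2.1 (W₀ ∩ U) hWopen Set.inter_subset_right s₁ s₂ h1 h2 hxW
      have c1 := (hC (W₀ ∩ U) hWopen).1 s₁ s₂ (fun z => g z • s₁ z) (fun z => g z • s₂ z)
        h1W h2W hEq1 hEq2 hxW
      have c2 := (hC (W₀ ∩ U) hWopen).2.1 (fun z => g z • s₁ z) (fun z => g z • s₂ z)
        ha hb hxW
      rw [c3, c1, c2]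
    rw [key B hB, key B' hB']
end

section
/- Let τ : E → M be a Banach bundle with typical fiber 𝔼. The set T^♭E* of covectors on E* of the form d(Φ_s + f ∘ τ*)(σ), with s a local section of τ and f a local smooth function on M, is a well-defined Banach subbundle of T*E* → E* with typical fiber 𝕄* × 𝔼 (where 𝕄 is the model of M), and T^♭E* = T*E* if and only if 𝔼 is reflexive. -/
/- Trivial-bundle model: `E* = 𝕄 × 𝔼*`, `T*_σ E* = (𝕄 × 𝔼*) →L[ℝ] ℝ ≅ 𝕄* × 𝔼**`.
`Φ_s(x,ξ) = ξ(s x)` and `f ∘ τ*` is `(x,ξ) ↦ f x`. -/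

variable (𝕄 𝔼 : Type*) [NormedAddCommGroup 𝕄] [NormedSpace ℝ 𝕄]
  [NormedAddCommGroup 𝔼] [NormedSpace ℝ 𝔼]

/-- The fiber of `T^♭E*` at `σ`: covectors of the form `d(Φ_s + f ∘ τ*)(σ)`. -/
noncomputable def TflatFiber (σ : 𝕄 × (𝔼 →L[ℝ] ℝ)) :
    Set ((𝕄 × (𝔼 →L[ℝ] ℝ)) →L[ℝ] ℝ) :=
  {η | ∃ (s : 𝕄 → 𝔼) (f : 𝕄 → ℝ), ContDiff ℝ (⊤ : ℕ∞) s ∧ ContDiff ℝ (⊤ : ℕ∞) f ∧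
    η = fderiv ℝ (fun p : 𝕄 × (𝔼 →L[ℝ] ℝ) => p.2 (s p.1) + f p.1) σ}

section aux

variable {𝕄 𝔼}

lemma stmt5_hasFDeriv (s : 𝕄 → 𝔼) (f : 𝕄 → ℝ) (hs : ContDiff ℝ (⊤ : ℕ∞) s)
    (hf : ContDiff ℝ (⊤ : ℕ∞) f) (σ : 𝕄 × (𝔼 →L[ℝ] ℝ)) :
    HasFDerivAt (fun p : 𝕄 × (𝔼 →L[ℝ] ℝ) => p.2 (s p.1) + f p.1)
      ((σ.2.comp ((fderiv ℝ s σ.1).comp (ContinuousLinearMap.fst ℝ 𝕄 (𝔼 →L[ℝ] ℝ))) +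
        (ContinuousLinearMap.snd ℝ 𝕄 (𝔼 →L[ℝ] ℝ)).flip (s σ.1)) +
        (fderiv ℝ f σ.1).comp (ContinuousLinearMap.fst ℝ 𝕄 (𝔼 →L[ℝ] ℝ))) σ := by
  have hc : HasFDerivAt (fun p : 𝕄 × (𝔼 →L[ℝ] ℝ) => p.2)
      (ContinuousLinearMap.snd ℝ 𝕄 (𝔼 →L[ℝ] ℝ)) σ := hasFDerivAt_snd
  have hfst : HasFDerivAt (fun p : 𝕄 × (𝔼 →L[ℝ] ℝ) => p.1)
      (ContinuousLinearMap.fst ℝ 𝕄 (𝔼 →L[ℝ] ℝ)) σ := hasFDerivAt_fst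
  have hu : HasFDerivAt (fun p : 𝕄 × (𝔼 →L[ℝ] ℝ) => s p.1)
      ((fderiv ℝ s σ.1).comp (ContinuousLinearMap.fst ℝ 𝕄 (𝔼 →L[ℝ] ℝ))) σ :=
    ((hs.differentiable (by simp) σ.1).hasFDerivAt).comp σ hfst
  have hF : HasFDerivAt (fun p : 𝕄 × (𝔼 →L[ℝ] ℝ) => f p.1)
      ((fderiv ℝ f σ.1).comp (ContinuousLinearMap.fst ℝ 𝕄 (𝔼 →L[ℝ] ℝ))) σ :=
    ((hf.differentiable (by simp) σ.1).hasFDerivAt).comp σ hfst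
  exact (hc.clm_apply hu).add hF

/-- The key characterization of `TflatFiber`. -/
lemma stmt5_fiber (σ : 𝕄 × (𝔼 →L[ℝ] ℝ)) :
    TflatFiber 𝕄 𝔼 σ =
      {η | ∃ (a : 𝕄 →L[ℝ] ℝ) (v : 𝔼),
        ∀ w : 𝕄 × (𝔼 →L[ℝ] ℝ), η w = a w.1 + w.2 v} := by
  ext η
  constructor
  · rintro ⟨s, f, hs, hf, rfl⟩
    refine ⟨σ.2.comp (fderiv ℝ s σ.1) + fderiv ℝ f σ.1, s σ.1, fun w => ?_⟩
    rw [(stmt5_hasFDeriv s f hs hf σ).fderiv]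
    simp only [ContinuousLinearMap.add_apply, ContinuousLinearMap.comp_apply,
      ContinuousLinearMap.flip_apply, ContinuousLinearMap.coe_fst',
      ContinuousLinearMap.coe_snd']
    ring
  · rintro ⟨a, v, h⟩
    refine ⟨fun _ => v, fun x => a x, contDiff_const, a.contDiff, ?_⟩
    have hd := stmt5_hasFDeriv (fun _ => v) (fun x => a x) contDiff_const a.contDiff σ
    rw [hd.fderiv]
    refine ContinuousLinearMap.ext fun w => ?_
    have hv : fderiv ℝ (fun _ : 𝕄 => v) σ.1 = 0 := fderiv_const_apply v
    have ha : fderiv ℝ (fun x : 𝕄 => a x) σ.1 = a := a.fderiv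
    rw [h w]
    simp [hv, ha, add_comm]

end aux

/-- `T^♭E*` is a well-defined subbundle of `T*E*` with typical fiber `𝕄* × 𝔼` (each fiber
is exactly the set of covectors `w ↦ a(w₁) + w₂(v)` with `a ∈ 𝕄*`, `v ∈ 𝔼`), and it is the
whole of `T*E*` if and only if `𝔼` is reflexive (the canonical inclusion of `𝔼` in its
bidual is surjective). -/
theorem stmt5 [CompleteSpace 𝕄] [CompleteSpace 𝔼] :
    (∀ σ : 𝕄 × (𝔼 →L[ℝ] ℝ),
      TflatFiber 𝕄 𝔼 σ =
        {η | ∃ (a : 𝕄 →L[ℝ] ℝ) (v : 𝔼),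
          ∀ w : 𝕄 × (𝔼 →L[ℝ] ℝ), η w = a w.1 + w.2 v}) ∧
    ((∀ σ : 𝕄 × (𝔼 →L[ℝ] ℝ), TflatFiber 𝕄 𝔼 σ = Set.univ) ↔
      Function.Surjective (NormedSpace.inclusionInDoubleDual ℝ 𝔼)) := by
  refine ⟨stmt5_fiber, ?_, ?_⟩
  · intro h b
    have hη : (b.comp (ContinuousLinearMap.snd ℝ 𝕄 (𝔼 →L[ℝ] ℝ))) ∈ TflatFiber 𝕄 𝔼 0 := by
      rw [h 0]; trivial
    rw [stmt5_fiber] at hη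
    obtain ⟨a, v, hav⟩ := hη
    refine ⟨v, ?_⟩
    ext ξ
    have := hav (0, ξ)
    simpa [NormedSpace.inclusionInDoubleDual] using this.symm
  · intro hsurj σ
    rw [stmt5_fiber]
    ext η
    simp only [Set.mem_univ, iff_true, Set.mem_setOf_eq]
    obtain ⟨v, hv⟩ := hsurj (η.comp (ContinuousLinearMap.inr ℝ 𝕄 (𝔼 →L[ℝ] ℝ)))
    refine ⟨η.comp (ContinuousLinearMap.inl ℝ 𝕄 (𝔼 →L[ℝ] ℝ)), v, fun w => ?_⟩
    have h1 : η w = η (w.1, 0) + η (0, w.2) := by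
      rw [← map_add]; simp
    have h2 : w.2 v = η (0, w.2) := by
      simpa [NormedSpace.inclusionInDoubleDual] using
        congrArg (fun g : ((𝔼 →L[ℝ] ℝ) →L[ℝ] ℝ) => g w.2) hv
    simp [h1, h2]
end

section
/- If L is a hyperregular Lagrangian on an almost Lie algebroid with reflexive typical fiber, then the Euler–Lagrange vector field L⃗ is a semispray; if moreover L is homogeneous of degree 2 (L ∘ h_λ = λ²L for all λ > 0, where h_λ is fiberwise scalar multiplication by λ), then L⃗ is a spray (i.e., L⃗ ∘ h_λ = λ · Th_λ ∘ L⃗). -/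
/- Trivialized model (see the file for statement 15): `E = 𝕄 × 𝔼`, anchor field `R`,
bracket field `C`; `Λ_L(x,u) = (x, D₂L(x,u))` is the Legendre transformation, and the
Euler–Lagrange vector field `Z = L⃗` of a hyperregular Lagrangian is characterized by
`TΛ_L(Z e) = h⃗_{h_L}(Λ_L e) = (R u, D₁L ∘ R − D₂L ∘ C(·,u))`.  The homothety is
`h_λ(x,u) = (x, λu)` with tangent map `Th_λ(v₁,v₂) = (v₁, λv₂)`. -/

variable {𝕄 𝔼 : Type*} [NormedAddCommGroup 𝕄] [NormedSpace ℝ 𝕄]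
  [NormedAddCommGroup 𝔼] [NormedSpace ℝ 𝔼]

noncomputable def D2L (L : 𝕄 × 𝔼 → ℝ) (e : 𝕄 × 𝔼) : 𝔼 →L[ℝ] ℝ :=
  fderiv ℝ (fun u => L (e.1, u)) e.2

noncomputable def D1L (L : 𝕄 × 𝔼 → ℝ) (e : 𝕄 × 𝔼) : 𝕄 →L[ℝ] ℝ :=
  fderiv ℝ (fun x => L (x, e.2)) e.1

noncomputable def LegendreT (L : 𝕄 × 𝔼 → ℝ) (e : 𝕄 × 𝔼) : 𝕄 × (𝔼 →L[ℝ] ℝ) :=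
  (e.1, D2L L e)

/-- For a hyperregular Lagrangian the Euler–Lagrange vector field is a semispray, and if
`L` is homogeneous of degree 2 it is a spray: `L⃗ ∘ h_λ = λ · Th_λ ∘ L⃗`. -/
theorem stmt16 [CompleteSpace 𝕄] [CompleteSpace 𝔼]
    (hrefl : Function.Surjective (NormedSpace.inclusionInDoubleDual ℝ 𝔼))
    (R : 𝕄 → 𝔼 →L[ℝ] 𝕄) (C : 𝕄 → 𝔼 →L[ℝ] 𝔼 →L[ℝ] 𝔼)
    (hCskew : ∀ (x : 𝕄) (u v : 𝔼), C x u v = -C x v u)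
    (L : 𝕄 × 𝔼 → ℝ) (hL : ContDiff ℝ (⊤ : ℕ∞) L)
    -- `L` is hyperregular: `Λ_L` is a (global) diffeomorphism
    (hbij : Function.Bijective (LegendreT L))
    (hreg : ∀ e : 𝕄 × 𝔼, Function.Bijective (fderiv ℝ (LegendreT L) e))
    -- `Z = L⃗` is the Euler–Lagrange vector field
    (Z : 𝕄 × 𝔼 → 𝕄 × 𝔼)
    (hZ : ∀ e : 𝕄 × 𝔼,
      fderiv ℝ (LegendreT L) e (Z e) =
        (R e.1 e.2,
          (D1L L e).comp (R e.1) - (D2L L e).comp ((C e.1).flip e.2))) :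
    -- `L⃗` is a semispray
    (∀ e : 𝕄 × 𝔼, (Z e).1 = R e.1 e.2) ∧
    -- if `L` is homogeneous of degree 2, `L⃗` is a spray
    ((∀ lam : ℝ, 0 < lam → ∀ e : 𝕄 × 𝔼, L (e.1, lam • e.2) = lam ^ 2 * L e) →
      ∀ lam : ℝ, 0 < lam → ∀ e : 𝕄 × 𝔼,
        Z (e.1, lam • e.2) = (lam • (Z e).1, (lam ^ 2) • (Z e).2)) := by
  classical
  have hLd : Differentiable ℝ L := hL.differentiable (by simp)
  set G : 𝕄 × 𝔼 → (𝔼 →L[ℝ] ℝ) := D2L L with hGdef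
  -- partial derivative in second variable
  have hpart2 : ∀ e : 𝕄 × 𝔼, HasFDerivAt (fun u : 𝔼 => L (e.1, u))
      ((fderiv ℝ L e).comp (ContinuousLinearMap.inr ℝ 𝕄 𝔼)) e.2 := fun e =>
    (hLd e).hasFDerivAt.comp e.2 (hasFDerivAt_prodMk_right e.1 e.2)
  have hGeq : ∀ e : 𝕄 × 𝔼,
      G e = (fderiv ℝ L e).comp (ContinuousLinearMap.inr ℝ 𝕄 𝔼) := fun e =>
    (hpart2 e).fderiv
  have hGat : ∀ e : 𝕄 × 𝔼, HasFDerivAt (fun u : 𝔼 => L (e.1, u)) (G e) e.2 := by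
    intro e; rw [hGeq e]; exact hpart2 e
  -- partial derivative in first variable
  have hpart1 : ∀ e : 𝕄 × 𝔼, HasFDerivAt (fun x : 𝕄 => L (x, e.2))
      ((fderiv ℝ L e).comp (ContinuousLinearMap.inl ℝ 𝕄 𝔼)) e.1 := fun e =>
    (hLd e).hasFDerivAt.comp e.1 (hasFDerivAt_prodMk_left e.1 e.2)
  have hD1eq : ∀ e : 𝕄 × 𝔼,
      D1L L e = (fderiv ℝ L e).comp (ContinuousLinearMap.inl ℝ 𝕄 𝔼) := fun e =>
    (hpart1 e).fderiv
  have hD1at : ∀ e : 𝕄 × 𝔼, HasFDerivAt (fun x : 𝕄 => L (x, e.2)) (D1L L e) e.1 := by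
    intro e; rw [hD1eq e]; exact hpart1 e
  -- G is smooth
  have hGcd : ContDiff ℝ (⊤ : ℕ∞) G := by
    have h1 : ContDiff ℝ (⊤ : ℕ∞) (fderiv ℝ L) := hL.fderiv_right (by exact_mod_cast le_top)
    have h2 : ContDiff ℝ (⊤ : ℕ∞)
        (fun e : 𝕄 × 𝔼 => (fderiv ℝ L e).comp (ContinuousLinearMap.inr ℝ 𝕄 𝔼)) :=
      h1.clm_comp contDiff_const
    rwa [show (fun e : 𝕄 × 𝔼 => (fderiv ℝ L e).comp (ContinuousLinearMap.inr ℝ 𝕄 𝔼)) = G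
      from (funext hGeq).symm] at h2
  have hGd : ∀ e : 𝕄 × 𝔼, HasFDerivAt G (fderiv ℝ G e) e := fun e =>
    (hGcd.differentiable (by simp) e).hasFDerivAt
  -- derivative of the Legendre transformation
  have hLT : ∀ e : 𝕄 × 𝔼, HasFDerivAt (LegendreT L)
      ((ContinuousLinearMap.fst ℝ 𝕄 𝔼).prod (fderiv ℝ G e)) e := fun e =>
    (HasFDerivAt.prodMk hasFDerivAt_fst (hGd e) : _)
  have hfder : ∀ e : 𝕄 × 𝔼, fderiv ℝ (LegendreT L) e =
      (ContinuousLinearMap.fst ℝ 𝕄 𝔼).prod (fderiv ℝ G e) := fun e => (hLT e).fderiv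
  -- the Euler–Lagrange equations, componentwise
  have hZ1 : ∀ e : 𝕄 × 𝔼, (Z e).1 = R e.1 e.2 := by
    intro e
    have h := hZ e
    rw [hfder e] at h
    simpa using congrArg Prod.fst h
  have hZ2 : ∀ e : 𝕄 × 𝔼, fderiv ℝ G e (Z e) =
      (D1L L e).comp (R e.1) - (G e).comp ((C e.1).flip e.2) := by
    intro e
    have h := hZ e
    rw [hfder e] at h
    simpa using congrArg Prod.snd h
  refine ⟨hZ1, ?_⟩
  intro hom lam hlam e
  have hlam0 : lam ≠ 0 := ne_of_gt hlam
  -- homogeneity of G : G (x, lam • u) = lam • G (x, u)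
  have claimA : ∀ e : 𝕄 × 𝔼, G (e.1, lam • e.2) = lam • G e := by
    intro e
    have hsc : HasFDerivAt (fun u : 𝔼 => lam • u)
        (lam • ContinuousLinearMap.id ℝ 𝔼) e.2 :=
      (lam • ContinuousLinearMap.id ℝ 𝔼).hasFDerivAt
    have h1 : HasFDerivAt (fun u : 𝔼 => L (e.1, lam • u))
        ((G (e.1, lam • e.2)).comp (lam • ContinuousLinearMap.id ℝ 𝔼)) e.2 :=
      (hGat (e.1, lam • e.2)).comp e.2 hsc
    have h2 : HasFDerivAt (fun u : 𝔼 => lam ^ 2 * L (e.1, u)) ((lam ^ 2) • G e) e.2 := by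
      simpa using (hGat e).const_mul (lam ^ 2)
    have hfe : (fun u : 𝔼 => L (e.1, lam • u)) = fun u : 𝔼 => lam ^ 2 * L (e.1, u) := by
      funext u; exact hom lam hlam (e.1, u)
    rw [hfe] at h1
    have huniq : (G (e.1, lam • e.2)).comp (lam • ContinuousLinearMap.id ℝ 𝔼)
        = (lam ^ 2) • G e := h1.unique h2
    have hl : (G (e.1, lam • e.2)).comp (lam • ContinuousLinearMap.id ℝ 𝔼)
        = lam • G (e.1, lam • e.2) := by
      ext v; simp
    rw [hl] at huniq
    calc G (e.1, lam • e.2) = lam⁻¹ • (lam • G (e.1, lam • e.2)) :=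
          (inv_smul_smul₀ hlam0 _).symm
      _ = lam⁻¹ • ((lam ^ 2) • G e) := by rw [huniq]
      _ = lam • G e := by
          rw [smul_smul]
          congr 1
          field_simp
  -- homogeneity of D1L : D1L (x, lam • u) = lam ^ 2 • D1L (x, u)
  have claimC : ∀ e : 𝕄 × 𝔼, D1L L (e.1, lam • e.2) = (lam ^ 2) • D1L L e := by
    intro e
    have h1 : HasFDerivAt (fun x : 𝕄 => L (x, lam • e.2))
        (D1L L (e.1, lam • e.2)) e.1 := hD1at (e.1, lam • e.2)
    have h2 : HasFDerivAt (fun x : 𝕄 => lam ^ 2 * L (x, e.2)) ((lam ^ 2) • D1L L e) e.1 := by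
      simpa using (hD1at e).const_mul (lam ^ 2)
    have hfe : (fun x : 𝕄 => L (x, lam • e.2)) = fun x : 𝕄 => lam ^ 2 * L (x, e.2) := by
      funext x; exact hom lam hlam (x, e.2)
    rw [hfe] at h1
    exact h1.unique h2
  -- derivative of the homogeneity relation for G
  set Hl : (𝕄 × 𝔼) →L[ℝ] 𝕄 × 𝔼 :=
    (ContinuousLinearMap.fst ℝ 𝕄 𝔼).prod (lam • ContinuousLinearMap.snd ℝ 𝕄 𝔼) with hHl
  have claimD : ∀ e : 𝕄 × 𝔼,
      (fderiv ℝ G (e.1, lam • e.2)).comp Hl = lam • fderiv ℝ G e := by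
    intro e
    have h1 : HasFDerivAt (fun e' : 𝕄 × 𝔼 => G (e'.1, lam • e'.2))
        ((fderiv ℝ G (e.1, lam • e.2)).comp Hl) e :=
      by have h := (hGd (e.1, lam • e.2)).comp e (Hl.hasFDerivAt (x := e)); exact h
    have h2 : HasFDerivAt (fun e' : 𝕄 × 𝔼 => lam • G e') (lam • fderiv ℝ G e) e :=
      (hGd e).const_smul lam
    have hfe : (fun e' : 𝕄 × 𝔼 => G (e'.1, lam • e'.2)) = fun e' : 𝕄 × 𝔼 => lam • G e' := by
      funext e'; exact claimA e'
    rw [hfe] at h1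
    exact h1.unique h2
  -- put it together at the point e
  have h1 : Hl (lam • Z e) = (lam • (Z e).1, (lam ^ 2) • (Z e).2) := by
    simp [hHl, smul_smul, pow_two]
  have key : fderiv ℝ G (e.1, lam • e.2) (lam • (Z e).1, (lam ^ 2) • (Z e).2)
      = (lam ^ 2) • fderiv ℝ G e (Z e) := by
    rw [← h1, ← ContinuousLinearMap.comp_apply, claimD e, ContinuousLinearMap.smul_apply,
      map_smul, smul_smul, ← pow_two]
  apply (hreg (e.1, lam • e.2)).1
  rw [hZ (e.1, lam • e.2), hfder (e.1, lam • e.2)]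
  have hc : (C e.1).flip (lam • e.2) = lam • (C e.1).flip e.2 := map_smul _ _ _
  refine Prod.ext ?_ ?_
  · show R e.1 (lam • e.2) = lam • (Z e).1
    rw [hZ1 e]
    exact map_smul _ _ _
  · show (D1L L (e.1, lam • e.2)).comp (R e.1)
        - (G (e.1, lam • e.2)).comp ((C e.1).flip (lam • e.2))
      = fderiv ℝ G (e.1, lam • e.2) (lam • (Z e).1, (lam ^ 2) • (Z e).2)
    rw [key, hZ2 e, claimC e, claimA e, hc]
    simp only [ContinuousLinearMap.smul_comp, ContinuousLinearMap.comp_smul, smul_smul,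
      smul_sub, pow_two]
end
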